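/- arXiv:1602.08782 — 5 statements merged into one kernel-verified Lean document; each statement's English description precedes it below -/
import Mathlib

section
/- Let G be an n-vertex k-uniform hypergraph (k ≥ 2), C > 1, and 0 < p ≤ 1. If for all 1 ≤ r ≤ d and all families of r distinct (k−1)-element vertex sets S_1, …, S_r we have |N_G(S_1) ∩ … ∩ N_G(S_r)| ≤ C·n·p^r, then for every 1 ≤ i ≤ k−1, for all 1 ≤ r ≤ d, and all families of r distinct i-element vertex sets T_1, …, T_r, we have |N_G(T_1) ∩ … ∩ N_G(T_r)| ≤ C·n^{k−i}·p^r. -/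
open scoped Classical

/-!
Double counting pairs `(T, v)` with `v ∈ T` shows that `(k - i)` times the common neighbourhood
of `i`-sets `S₁, …, Sᵣ` is at most the sum over vertices `v` of the number of its members
containing `v`. Removing `v` from those members lands them in the common neighbourhood of the
`(i + 1)`-sets `S₁ ∪ {v}, …, Sᵣ ∪ {v}`, which are still `r` distinct sets because no `Sⱼ` can
contain `v` (the sets `Sⱼ` and `T` are disjoint, their union being an edge of size `|Sⱼ| + |T|`).
So one vertex costs a factor `n`, and downward induction from `i = k - 1` gives the bound.
-/

open Finset

variable {α : Type*} [DecidableEq α] {E 𝒯 : Finset (Finset α)} {i j k : ℕ}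

theorem card_image_insert_of_forall_notMem {v : α} (hv : ∀ S ∈ 𝒯, v ∉ S) :
    #(𝒯.image (insert v)) = #𝒯 :=
  card_image_of_injOn fun S hS S' hS' h => by
    rw [← erase_insert (hv S hS), h, erase_insert (hv S' hS')]

variable [Fintype α]

/-- The common neighbourhood `N(S₁) ∩ ⋯ ∩ N(Sᵣ)` of the family `𝒯 = {S₁, …, Sᵣ}`, restricted to
sets of size `j`. -/
def commonNbhd (E 𝒯 : Finset (Finset α)) (j : ℕ) : Finset (Finset α) :=
  {T ∈ powersetCard j univ | ∀ S ∈ 𝒯, S ∪ T ∈ E}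

theorem mem_commonNbhd {T : Finset α} :
    T ∈ commonNbhd E 𝒯 j ↔ #T = j ∧ ∀ S ∈ 𝒯, S ∪ T ∈ E := by
  rw [commonNbhd, mem_filter, mem_powersetCard_univ]

theorem disjoint_of_mem_commonNbhd (hunif : ∀ e ∈ E, #e = k) {S T : Finset α} (hS : S ∈ 𝒯)
    (hSi : #S = i) (hik : i ≤ k) (hT : T ∈ commonNbhd E 𝒯 (k - i)) : Disjoint S T := by
  obtain ⟨hTcard, hTE⟩ := mem_commonNbhd.1 hT
  rw [← card_union_eq_card_add_card, hunif _ (hTE S hS), hSi, hTcard]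
  omega

theorem card_filter_mem_commonNbhd_succ_le (E 𝒯 : Finset (Finset α)) (j : ℕ) (v : α) :
    #{T ∈ commonNbhd E 𝒯 (j + 1) | v ∈ T} ≤ #(commonNbhd E (𝒯.image (insert v)) j) := by
  refine card_le_card_of_injOn (fun T => T.erase v) (fun T hT => ?_)
    fun T₁ h₁ T₂ h₂ (h : T₁.erase v = T₂.erase v) => ?_
  · obtain ⟨hT, hvT⟩ := mem_filter.1 hT
    obtain ⟨hTcard, hTE⟩ := mem_commonNbhd.1 hT
    refine mem_commonNbhd.2 ⟨by rw [card_erase_of_mem hvT, hTcard, Nat.add_sub_cancel], ?_⟩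
    simp only [forall_mem_image]
    intro S hS
    rw [insert_union, ← union_insert, insert_erase hvT]
    exact hTE S hS
  · rw [← insert_erase (mem_filter.1 h₁).2, h, insert_erase (mem_filter.1 h₂).2]

theorem card_commonNbhd_mul_le (hunif : ∀ e ∈ E, #e = k) (hik : i < k) {B : ℝ} (hB : 0 ≤ B)
    (hsucc : ∀ 𝒮 : Finset (Finset α), #𝒮 = #𝒯 → (∀ S ∈ 𝒮, #S = i + 1) →
      (#(commonNbhd E 𝒮 (k - (i + 1))) : ℝ) ≤ B)
    (h𝒯 : ∀ S ∈ 𝒯, #S = i) :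
    (#(commonNbhd E 𝒯 (k - i)) : ℝ) * (k - i : ℕ) ≤ Fintype.card α * B := by
  have := card_nsmul_le_card_nsmul (fun T v => v ∈ T) (s := commonNbhd E 𝒯 (k - i)) (t := univ)
    (m := ((k - i : ℕ) : ℝ)) (n := B) ?_ ?_
  · simpa [nsmul_eq_mul] using this
  · intro T hT
    simp [bipartiteAbove, (mem_commonNbhd.1 hT).1]
  · intro v _
    by_cases hv : ∀ S ∈ 𝒯, v ∉ S
    · calc (#(bipartiteBelow _ _ v) : ℝ)
            ≤ #(commonNbhd E (𝒯.image (insert v)) (k - (i + 1))) := by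
            rw [bipartiteBelow, show k - i = k - (i + 1) + 1 by omega]
            exact_mod_cast card_filter_mem_commonNbhd_succ_le E 𝒯 _ v
        _ ≤ B := by
            refine hsucc _ (card_image_insert_of_forall_notMem hv) ?_
            simp only [forall_mem_image]
            intro S hS
            rw [card_insert_of_notMem (hv S hS), h𝒯 S hS]
    · push Not at hv
      obtain ⟨S, hS, hvS⟩ := hv
      have hempty : bipartiteBelow (fun T v => v ∈ T) (commonNbhd E 𝒯 (k - i)) v = ∅ :=
        filter_eq_empty_iff.2 fun T hT hvT =>
          disjoint_left.1 (disjoint_of_mem_commonNbhd hunif hS (h𝒯 S hS) hik.le hT) hvS hvT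
      simpa [hempty] using hB

theorem card_commonNbhd_le_pow_of_codegree_bound (hunif : ∀ e ∈ E, #e = k) {c : ℝ} (hc : 0 ≤ c)
    (r : ℕ) (hcodeg : ∀ 𝒮 : Finset (Finset α), #𝒮 = r → (∀ S ∈ 𝒮, #S = k - 1) →
      (#(commonNbhd E 𝒮 (k - (k - 1))) : ℝ) ≤ c * Fintype.card α ^ (k - (k - 1)))
    (hik : i ≤ k - 1) (𝒯 : Finset (Finset α)) (h𝒯r : #𝒯 = r) (h𝒯i : ∀ S ∈ 𝒯, #S = i) :
    (#(commonNbhd E 𝒯 (k - i)) : ℝ) ≤ c * Fintype.card α ^ (k - i) := by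
  induction hik using Nat.decreasingInduction generalizing 𝒯 with
  | self => exact hcodeg 𝒯 h𝒯r h𝒯i
  | of_succ m hm ih =>
    have hmk : 1 ≤ ((k - m : ℕ) : ℝ) := by exact_mod_cast (by omega : 1 ≤ k - m)
    have hmul := card_commonNbhd_mul_le hunif (by omega) (by positivity)
      (fun 𝒮 h𝒮r h𝒮i => ih 𝒮 (h𝒮r.trans h𝒯r) h𝒮i) h𝒯i
    calc (#(commonNbhd E 𝒯 (k - m)) : ℝ)
        ≤ #(commonNbhd E 𝒯 (k - m)) * (k - m : ℕ) := le_mul_of_one_le_right (by positivity) hmk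
      _ ≤ Fintype.card α * (c * Fintype.card α ^ (k - (m + 1))) := hmul
      _ = c * Fintype.card α ^ (k - m) := by
        rw [show k - m = k - (m + 1) + 1 by omega, pow_succ]
        ring

theorem stmt2_general (k n d : ℕ) (C p : ℝ) (hC : 1 < C) (hp0 : 0 < p)
    (E : Finset (Finset (Fin n))) (hunif : ∀ e ∈ E, e.card = k)
    (hbdd : ∀ r : ℕ, 1 ≤ r → r ≤ d → ∀ 𝒮 : Finset (Finset (Fin n)),
      𝒮.card = r → (∀ S ∈ 𝒮, S.card = k - 1) →
      ((((Finset.univ : Finset (Fin n)).powersetCard (k - (k - 1))).filter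
          (fun T => ∀ S ∈ 𝒮, S ∪ T ∈ E)).card : ℝ) ≤ C * n * p ^ r) :
    ∀ i : ℕ, 1 ≤ i → i ≤ k - 1 → ∀ r : ℕ, 1 ≤ r → r ≤ d → ∀ 𝒯 : Finset (Finset (Fin n)),
      𝒯.card = r → (∀ S ∈ 𝒯, S.card = i) →
      ((((Finset.univ : Finset (Fin n)).powersetCard (k - i)).filter
          (fun T => ∀ S ∈ 𝒯, S ∪ T ∈ E)).card : ℝ) ≤ C * (n : ℝ) ^ (k - i) * p ^ r := by
  intro i hi1 hik r hr1 hrd 𝒯 h𝒯r h𝒯i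
  have hc : 0 ≤ C * p ^ r := mul_nonneg (by linarith) (pow_nonneg hp0.le r)
  have hk1 : k - (k - 1) = 1 := by omega
  have key := card_commonNbhd_le_pow_of_codegree_bound hunif hc r (fun 𝒮 h𝒮r h𝒮i => ?_) hik 𝒯
    h𝒯r h𝒯i
  · simpa only [commonNbhd, Fintype.card_fin, mul_right_comm] using key
  · simpa only [commonNbhd, Fintype.card_fin, hk1, pow_one, mul_right_comm]
      using hbdd r hr1 hrd 𝒮 h𝒮r h𝒮i

/-- BDD for `(k-1)`-sets implies BDD_i for all `1 ≤ i ≤ k-1`: if all common neighbourhoods of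
`r ≤ d` distinct `(k-1)`-sets have size at most `C·n·pʳ`, then all common neighbourhoods of
`r ≤ d` distinct `i`-sets have size at most `C·n^{k-i}·pʳ`. -/
theorem stmt2 (k n d : ℕ) (hk : 2 ≤ k) (C p : ℝ) (hC : 1 < C) (hp0 : 0 < p) (hp1 : p ≤ 1)
    (E : Finset (Finset (Fin n))) (hunif : ∀ e ∈ E, e.card = k)
    (hbdd : ∀ r : ℕ, 1 ≤ r → r ≤ d → ∀ 𝒮 : Finset (Finset (Fin n)),
      𝒮.card = r → (∀ S ∈ 𝒮, S.card = k - 1) →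
      ((((Finset.univ : Finset (Fin n)).powersetCard (k - (k - 1))).filter
          (fun T => ∀ S ∈ 𝒮, S ∪ T ∈ E)).card : ℝ) ≤ C * n * p ^ r) :
    ∀ i : ℕ, 1 ≤ i → i ≤ k - 1 → ∀ r : ℕ, 1 ≤ r → r ≤ d → ∀ 𝒯 : Finset (Finset (Fin n)),
      𝒯.card = r → (∀ S ∈ 𝒯, S.card = i) →
      ((((Finset.univ : Finset (Fin n)).powersetCard (k - i)).filter
          (fun T => ∀ S ∈ 𝒯, S ∪ T ∈ E)).card : ℝ) ≤ C * (n : ℝ) ^ (k - i) * p ^ r :=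
  stmt2_general k n d C p hC hp0 E hunif hbdd
end

section
/- Let H = (V, E) be a linear k-uniform hypergraph, let d_H = max over subhypergraphs J of H of the minimum degree δ(J), and let D_H = min{k·d_H, Δ(H)}. Let 0 ≤ ℓ ≤ max{k, d_H} and let W = (w_1, …, w_ℓ) be a sequence of distinct vertices of H. Then there exists a D_H-degenerate ordering w_1, …, w_ℓ, v_{ℓ+1}, …, v_{|V|} of V that begins with W. -/
open scoped Classical

def degOn {m : ℕ} (E : Finset (Finset (Fin m))) (U : Finset (Fin m)) (v : Fin m) : ℕ :=
  (E.filter (fun e => v ∈ e ∧ e ⊆ U)).card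

/-- `d_H`: maximum over (induced) subhypergraphs of the minimum degree. -/
def dH {m : ℕ} (E : Finset (Finset (Fin m))) : ℕ :=
  (Finset.univ : Finset (Fin m)).powerset.sup
    (fun U => if h : U.Nonempty then U.inf' h (degOn E U) else 0)

def maxDeg {m : ℕ} (E : Finset (Finset (Fin m))) : ℕ :=
  Finset.univ.sup (fun v => (E.filter (fun e => v ∈ e)).card)

def DH (k : ℕ) {m : ℕ} (E : Finset (Finset (Fin m))) : ℕ :=
  min (k * dH E) (maxDeg E)

/-!
Build the ordering from the back: while vertices outside `W` remain in the current set `U`,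
some vertex of `U \ W` has degree at most `k d_H` in `H[U]`; place it last and recurse.
To find it, take `v` of minimum degree in `H[U \ W]`, so of degree at most `d_H` there. By
linearity the other edges of `H[U]` through `v` meet `W` in distinct vertices, whence
`deg_U v ≤ d_H + max(k, d_H)`, at most `k d_H` as soon as `d_H ≥ 2`. If `d_H = 1`, peeling shows
that `H[U]` has at most `|U| - k + 1` edges, and double counting incidences rules out that every
vertex of `U \ W` has degree above `k`. On the first `ℓ` positions linearity alone suffices:
the edges of `H[S]` through `v` are disjoint off `v`, so `deg_S v · (k - 1) ≤ |S| - 1`.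
-/

open Finset

section Hypergraph

variable {m k : ℕ} {E : Finset (Finset (Fin m))}

theorem degOn_le_maxDeg (E : Finset (Finset (Fin m))) (U : Finset (Fin m)) (v : Fin m) :
    degOn E U v ≤ maxDeg E :=
  (card_le_card (monotone_filter_right E fun _ _ h => h.1)).trans
    (le_sup (f := fun v => #{e ∈ E | v ∈ e}) (mem_univ v))

theorem inf'_degOn_le_dH (E : Finset (Finset (Fin m))) {U : Finset (Fin m)} (hU : U.Nonempty) :
    U.inf' hU (degOn E U) ≤ dH E := by
  have h := le_sup (mem_powerset.mpr (subset_univ U))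
    (f := fun U : Finset (Fin m) => if h : U.Nonempty then U.inf' h (degOn E U) else 0)
  rwa [dif_pos hU] at h

theorem exists_degOn_le_dH (E : Finset (Finset (Fin m))) {U : Finset (Fin m)} (hU : U.Nonempty) :
    ∃ v ∈ U, degOn E U v ≤ dH E := by
  obtain ⟨v, hv, hmin⟩ := exists_mem_eq_inf' hU (degOn E U)
  exact ⟨v, hv, hmin ▸ inf'_degOn_le_dH E hU⟩

theorem one_le_dH_of_degOn_pos {U : Finset (Fin m)} {v : Fin m} (h : 0 < degOn E U v) :
    1 ≤ dH E := by
  obtain ⟨e, he⟩ := card_pos.mp h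
  rw [mem_filter] at he
  refine le_trans (le_inf' ⟨v, he.2.1⟩ _ fun x hx => ?_) (inf'_degOn_le_dH E ⟨v, he.2.1⟩)
  exact card_pos.mpr ⟨e, mem_filter.mpr ⟨he.1, hx, subset_rfl⟩⟩

theorem eq_of_linear_of_mem_of_mem (hlin : ∀ e ∈ E, ∀ f ∈ E, e ≠ f → #(e ∩ f) ≤ 1)
    {e f : Finset (Fin m)} (he : e ∈ E) (hf : f ∈ E) {x y : Fin m} (hxy : x ≠ y)
    (hxe : x ∈ e) (hye : y ∈ e) (hxf : x ∈ f) (hyf : y ∈ f) : e = f := by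
  by_contra hef
  exact hxy (card_le_one.mp (hlin e he f hf hef) x (mem_inter.mpr ⟨hxe, hxf⟩) y
    (mem_inter.mpr ⟨hye, hyf⟩))

theorem degOn_mul_le_card_erase (hunif : ∀ e ∈ E, #e = k)
    (hlin : ∀ e ∈ E, ∀ f ∈ E, e ≠ f → #(e ∩ f) ≤ 1) (S : Finset (Fin m)) (v : Fin m) :
    degOn E S v * (k - 1) ≤ #(S.erase v) := by
  -- double count the pairs `(e, x)` with `x ∈ e \ {v}`: linearity puts each `x` in one edge
  have h := card_mul_le_card_mul (fun e x => x ∈ e) (s := {e ∈ E | v ∈ e ∧ e ⊆ S})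
    (t := S.erase v) (m := k - 1) (n := 1) (fun e he => ?_) (fun x hx => ?_)
  · rwa [mul_one] at h
  · rw [mem_filter] at he
    have : (S.erase v).bipartiteAbove (fun e x => x ∈ e) e = e.erase v := by
      ext x
      simp only [mem_bipartiteAbove, mem_erase]
      exact ⟨fun h => ⟨h.1.1, h.2⟩, fun h => ⟨⟨h.1, he.2.2 h.2⟩, h.2⟩⟩
    rw [this, card_erase_of_mem he.2.1, hunif e he.1]
  · rw [mem_erase] at hx
    refine card_le_one.mpr fun e he f hf => ?_
    simp only [mem_bipartiteBelow, mem_filter] at he hf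
    exact eq_of_linear_of_mem_of_mem hlin he.1.1 hf.1.1 hx.1.symm he.1.2.1 he.2 hf.1.2.1 hf.2

theorem degOn_le_mul_dH_of_card_le (hk : 2 ≤ k) (hunif : ∀ e ∈ E, #e = k)
    (hlin : ∀ e ∈ E, ∀ f ∈ E, e ≠ f → #(e ∩ f) ≤ 1) {S : Finset (Fin m)} (v : Fin m)
    (hS : #S ≤ max k (dH E)) : degOn E S v ≤ k * dH E := by
  rcases Nat.eq_zero_or_pos (degOn E S v) with h0 | hpos
  · omega
  have hd := one_le_dH_of_degOn_pos hpos
  obtain ⟨e, he⟩ := card_pos.mp hpos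
  have hvS : v ∈ S := (mem_filter.mp he).2.2 (mem_filter.mp he).2.1
  have hcount := degOn_mul_le_card_erase hunif hlin S v
  rw [card_erase_of_mem hvS] at hcount
  have : degOn E S v ≤ degOn E S v * (k - 1) := Nat.le_mul_of_pos_right _ (by omega)
  have : max k (dH E) ≤ k * dH E :=
    max_le (Nat.le_mul_of_pos_right k hd) (Nat.le_mul_of_pos_left _ (by omega))
  omega

theorem degOn_eq_degOn_add {T U : Finset (Fin m)} (hTU : T ⊆ U) (v : Fin m) :
    degOn E U v = degOn E T v + #{e ∈ E | v ∈ e ∧ e ⊆ U ∧ ¬e ⊆ T} := by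
  rw [degOn, degOn, ← card_filter_add_card_filter_not (s := {e ∈ E | v ∈ e ∧ e ⊆ U}) (· ⊆ T),
    filter_filter, filter_filter]
  congr 2 <;> refine filter_congr fun e _ => ?_
  · exact ⟨fun h => ⟨h.1.1, h.2⟩, fun h => ⟨⟨h.1, h.2.trans hTU⟩, h.2⟩⟩
  · exact and_assoc

theorem degOn_le_degOn_sdiff_add_card (hlin : ∀ e ∈ E, ∀ f ∈ E, e ≠ f → #(e ∩ f) ≤ 1)
    {U R : Finset (Fin m)} {v : Fin m} (hv : v ∉ R) :
    degOn E U v ≤ degOn E (U \ R) v + #R := by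
  rw [degOn_eq_degOn_add sdiff_subset v]
  refine Nat.add_le_add_left (card_le_card_of_forall_subsingleton (fun e x => x ∈ e)
    (fun e he => ?_) fun x hx e he f hf => ?_) _
  · obtain ⟨-, -, heU, heT⟩ := mem_filter.mp he
    obtain ⟨x, hxe, hxT⟩ := not_subset.mp heT
    exact ⟨x, by simpa [heU hxe] using hxT, hxe⟩
  · simp only [Set.mem_ofPred_eq, mem_filter] at he hf
    exact eq_of_linear_of_mem_of_mem hlin he.1.1 hf.1.1 (ne_of_mem_of_not_mem hx hv).symm
      he.1.2.1 he.2 hf.1.2.1 hf.2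

theorem card_filter_subset_eq_degOn_add (U : Finset (Fin m)) (v : Fin m) :
    #{e ∈ E | e ⊆ U} = degOn E U v + #{e ∈ E | e ⊆ U.erase v} := by
  rw [← card_filter_add_card_filter_not (s := {e ∈ E | e ⊆ U}) (v ∈ ·), filter_filter,
    filter_filter, degOn]
  congr 2 <;> refine filter_congr fun e _ => ?_
  · exact and_comm
  · exact subset_erase.symm

theorem card_filter_subset_le_dH_mul (hk : 1 ≤ k) (hunif : ∀ e ∈ E, #e = k) (U : Finset (Fin m)) :
    #{e ∈ E | e ⊆ U} ≤ dH E * (#U + 1 - k) := by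
  induction U using Finset.strongInduction with
  | _ U ih =>
  obtain hempty | ⟨e, he⟩ := eq_empty_or_nonempty {e ∈ E | e ⊆ U}
  · simp [hempty]
  rw [mem_filter] at he
  have hkU : k ≤ #U := hunif e he.1 ▸ card_le_card he.2
  obtain ⟨v, hv, hdeg⟩ := exists_degOn_le_dH E (U := U) (card_pos.mp (by omega))
  have hrest := ih (U.erase v) (erase_ssubset hv)
  rw [card_erase_of_mem hv] at hrest
  calc #{e ∈ E | e ⊆ U} ≤ dH E + dH E * (#U - 1 + 1 - k) := by
        rw [card_filter_subset_eq_degOn_add U v]; exact add_le_add hdeg hrest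
    _ = dH E * (#U + 1 - k) := by
        rw [show #U + 1 - k = #U - 1 + 1 - k + 1 by omega, mul_add_one, add_comm]

theorem sum_card_inter_add_card_filter_le {α : Type*} [DecidableEq α] {B : Finset (Finset α)}
    (hB : ∀ e ∈ B, #e = k) (T : Finset α) :
    ∑ e ∈ B, #(T ∩ e) + #{e ∈ B | ¬e ⊆ T} ≤ #B * k := by
  rw [card_filter, ← sum_add_distrib, ← smul_eq_mul]
  refine sum_le_card_nsmul _ _ _ fun e he => ?_
  split_ifs with h
  · rw [add_zero, inter_eq_right.mpr h, hB e he]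
  · rw [← hB e he]
    exact card_lt_card ⟨inter_subset_right, fun hsub => h (hsub.trans inter_subset_left)⟩

theorem exists_degOn_le_mul_dH (hk : 2 ≤ k) (hunif : ∀ e ∈ E, #e = k)
    (hlin : ∀ e ∈ E, ∀ f ∈ E, e ≠ f → #(e ∩ f) ≤ 1) {R U : Finset (Fin m)} (hRU : R ⊆ U)
    (hR : #R ≤ max k (dH E)) (hT : (U \ R).Nonempty) :
    ∃ v ∈ U \ R, degOn E U v ≤ k * dH E := by
  by_contra! hcon
  set T := U \ R
  obtain ⟨v₀, hv₀, hv₀T⟩ := exists_degOn_le_dH E hT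
  have hv₀U : degOn E U v₀ ≤ degOn E T v₀ + #R :=
    degOn_le_degOn_sdiff_add_card hlin (mem_sdiff.mp hv₀).2
  have hv₀big := hcon v₀ hv₀
  obtain hd | hd : dH E = 1 ∨ 2 ≤ dH E := by
    have := one_le_dH_of_degOn_pos (Nat.zero_lt_of_lt hv₀big)
    omega
  swap
  · rcases le_total k (dH E) with h | h
    · rw [max_eq_right h] at hR
      nlinarith
    · rw [max_eq_left h] at hR
      nlinarith
  -- `d_H = 1`: counting incidences, `#T * (k + 1) + k ≤ k * #{e ∈ E | e ⊆ U} ≤ k * (#T + 1)`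
  have hUT : #U ≤ #T + k := by
    have : #T + #R = #U := card_sdiff_add_card_eq_card hRU
    rw [hd, max_eq_left (by omega)] at hR
    omega
  have hedges : #{e ∈ E | e ⊆ U} ≤ #T + 1 :=
    (card_filter_subset_le_dH_mul (by omega) hunif U).trans (by rw [hd, one_mul]; omega)
  have hinc : #T * (k + 1) ≤ ∑ e ∈ {e ∈ E | e ⊆ U}, #(T ∩ e) :=
    le_sum_card_inter fun v hv => Nat.succ_le_of_lt <| by
      rw [filter_filter]
      simpa only [degOn, and_comm, hd, mul_one] using hcon v hv
  have hout : k ≤ #{e ∈ {e ∈ E | e ⊆ U} | ¬e ⊆ T} := by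
    have hsplit : degOn E U v₀ = degOn E T v₀ + #{e ∈ E | v₀ ∈ e ∧ e ⊆ U ∧ ¬e ⊆ T} :=
      degOn_eq_degOn_add sdiff_subset v₀
    have hsub : #{e ∈ E | v₀ ∈ e ∧ e ⊆ U ∧ ¬e ⊆ T} ≤ #{e ∈ {e ∈ E | e ⊆ U} | ¬e ⊆ T} :=
      card_le_card fun e he => by
        simp only [mem_filter] at he ⊢
        exact ⟨⟨he.1, he.2.2.1⟩, he.2.2.2⟩
    rw [hd] at hv₀T hv₀big
    omega
  have hsum := sum_card_inter_add_card_filter_le (B := {e ∈ E | e ⊆ U})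
    (fun e he => hunif e (mem_filter.mp he).1) T
  have hTpos := hT.card_pos
  nlinarith [Nat.mul_le_mul_right k hedges]

end Hypergraph

theorem List.exists_nodup_extension {α : Type*} [DecidableEq α] (P : Finset α → α → Prop)
    {L₀ : List α} (hL₀ : L₀.Nodup)
    (hstep : ∀ U, L₀.toFinset ⊆ U → (U \ L₀.toFinset).Nonempty →
      ∃ v ∈ U \ L₀.toFinset, P U v)
    (U : Finset α) (hU : L₀.toFinset ⊆ U) :
    ∃ L : List α, L.Nodup ∧ L.toFinset = U ∧ L₀ <+: L ∧
      ∀ i (hi : i < L.length), L₀.length ≤ i → P (L.take (i + 1)).toFinset L[i] := by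
  induction U using Finset.strongInduction with
  | _ U ih =>
  obtain hUL₀ | hne := (U \ L₀.toFinset).eq_empty_or_nonempty
  · refine ⟨L₀, hL₀, ?_, List.prefix_refl L₀, fun i hi hi' => absurd hi (by omega)⟩
    exact hU.antisymm (sdiff_eq_empty_iff_subset.mp hUL₀)
  obtain ⟨v, hv, hPv⟩ := hstep U hU hne
  obtain ⟨hvU, hvL₀⟩ := mem_sdiff.mp hv
  obtain ⟨L, hL, hLU, hpre, hP⟩ := ih (U.erase v) (erase_ssubset hvU)
    (subset_erase.mpr ⟨hU, fun h => hvL₀ h⟩)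
  have hvL : v ∉ L := by
    rw [← List.mem_toFinset, hLU]
    exact notMem_erase v U
  have hLvU : (L ++ [v]).toFinset = U := by
    rw [List.toFinset_append, hLU]
    simp [insert_erase hvU]
  refine ⟨L ++ [v], ?_, hLvU, hpre.trans (List.prefix_append L [v]), fun i hi hi' => ?_⟩
  · exact List.concat_eq_append ▸ hL.concat hvL
  rw [List.length_append, List.length_singleton] at hi
  obtain hi | rfl := Nat.lt_succ_iff_lt_or_eq.mp hi
  · rw [List.take_append_of_le_length hi, List.getElem_append_left hi]
    exact hP i hi hi'
  · rw [List.take_of_length_le (by simp), List.getElem_append_right le_rfl]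
    simpa [hLvU] using hPv

theorem List.Nodup.exists_perm_getElem {m : ℕ} {L : List (Fin m)} (hL : L.Nodup)
    (hLuniv : L.toFinset = univ) :
    ∃ σ : Equiv.Perm (Fin m), (∀ i : Fin m, ∃ hi : (i : ℕ) < L.length, σ i = L[(i : ℕ)]) ∧
      ∀ (i : Fin m) (e : Finset (Fin m)),
        (∀ x ∈ e, (σ.symm x : ℕ) ≤ i) ↔ e ⊆ (L.take (i + 1)).toFinset := by
  have hmem (x : Fin m) : x ∈ L := List.mem_toFinset.mp (hLuniv ▸ mem_univ x)
  have hlen : L.length = m := by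
    rw [← List.toFinset_card_of_nodup hL, hLuniv, card_univ, Fintype.card_fin]
  refine ⟨(finCongr hlen.symm).trans (hL.getEquivOfForallMemList L hmem),
    fun i => ⟨hlen.symm ▸ i.isLt, rfl⟩, fun i e => ?_⟩
  rw [subset_iff]
  refine forall₂_congr fun x _ => ?_
  rw [List.mem_toFinset, List.mem_take_iff_idxOf_lt (hmem x), Nat.lt_succ_iff]
  rfl

/-- Any sequence `W` of at most `max{k, d_H}` distinct vertices of a linear `k`-uniform
hypergraph can be extended to a `D_H`-degenerate ordering of the vertices beginning with `W`. -/
theorem stmt3 (k m ℓ : ℕ) (hk : 2 ≤ k)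
    (E : Finset (Finset (Fin m))) (hunif : ∀ e ∈ E, e.card = k)
    (hlin : ∀ e ∈ E, ∀ f ∈ E, e ≠ f → (e ∩ f).card ≤ 1)
    (hℓ : ℓ ≤ max k (dH E)) (W : Fin ℓ → Fin m) (hW : Function.Injective W) :
    ∃ σ : Equiv.Perm (Fin m),
      (∀ (i : ℕ) (hi : i < ℓ) (hi' : i < m), σ ⟨i, hi'⟩ = W ⟨i, hi⟩) ∧
      ∀ i : Fin m,
        (E.filter (fun e => σ i ∈ e ∧ ∀ x ∈ e, (σ.symm x : ℕ) ≤ (i : ℕ))).card ≤ DH k E := by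
  obtain ⟨L, hL, hLuniv, hpre, hL_deg⟩ := List.exists_nodup_extension
    (fun U v => degOn E U v ≤ k * dH E) (List.nodup_ofFn.mpr hW)
    (fun U hWU hne => exists_degOn_le_mul_dH hk hunif hlin hWU
      ((List.toFinset_card_le _).trans (by simpa using hℓ)) hne)
    univ (subset_univ _)
  obtain ⟨σ, hσ, hσ_prefix⟩ := hL.exists_perm_getElem hLuniv
  refine ⟨σ, fun i hi hi' => ?_, fun i => ?_⟩
  · obtain ⟨_, hσi⟩ := hσ ⟨i, hi'⟩
    rw [hσi, ← hpre.getElem (by simpa using hi), List.getElem_ofFn]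
  obtain ⟨hiL, hσi⟩ := hσ i
  rw [filter_congr fun e _ => and_congr_right fun _ => hσ_prefix i e, ← degOn]
  refine le_min ?_ (degOn_le_maxDeg E _ _)
  rcases lt_or_ge (i : ℕ) ℓ with hi | hi
  · refine degOn_le_mul_dH_of_card_le hk hunif hlin _ ((List.toFinset_card_le _).trans ?_)
    simp only [List.length_take]
    omega
  · rw [hσi]
    exact hL_deg i hiL (by simpa using hi)
end

section
/- Let H be a linear k-uniform hypergraph (k ≥ 2) that is connector-free, let v be any vertex of H, and let N_H(v) = {S : S ∪ {v} ∈ E(H)} be the collection of (k−1)-sets forming edges with v. Then the union ⋃ N_H(v) of all these (k−1)-sets is a stable set in H (it contains no edge of H). -/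
open scoped Classical

/-- An edge `e` is a connector if some vertex `v ∉ e` lies in `k` edges each meeting `e` in
exactly one vertex. -/
def IsConnector {m : ℕ} (k : ℕ) (E : Finset (Finset (Fin m))) (e : Finset (Fin m)) : Prop :=
  ∃ v : Fin m, v ∉ e ∧ ∃ g : Fin k → Finset (Fin m), Function.Injective g ∧
    ∀ i, g i ∈ E ∧ v ∈ g i ∧ (e ∩ g i).card = 1

/-- In a linear connector-free `k`-uniform hypergraph, for any vertex `v` the union of the
neighbourhood `(k-1)`-sets of `v` is stable (contains no edge). -/
theorem stmt8 (k m : ℕ) (hk : 2 ≤ k)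
    (E : Finset (Finset (Fin m))) (hunif : ∀ e ∈ E, e.card = k)
    (hlin : ∀ e ∈ E, ∀ f ∈ E, e ≠ f → (e ∩ f).card ≤ 1)
    (hcf : ∀ e ∈ E, ¬ IsConnector k E e)
    (v : Fin m) :
    ∀ e ∈ E, ¬ e ⊆ (E.filter (fun f => v ∈ f)).biUnion (fun f => f.erase v) := by
  intro e he hsub
  apply hcf e he
  have hv : v ∉ e := by
    intro hvmem
    have h := hsub hvmem
    simp [Finset.mem_biUnion, Finset.mem_filter, Finset.mem_erase] at h
  have hF : ∀ x ∈ e, ∃ f, f ∈ E ∧ v ∈ f ∧ x ∈ f := by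
    intro x hx
    have h := hsub hx
    simp only [Finset.mem_biUnion, Finset.mem_filter, Finset.mem_erase] at h
    obtain ⟨f, ⟨hfE, hvf⟩, _, hxf⟩ := h
    exact ⟨f, hfE, hvf, hxf⟩
  choose F hFE hFv hFx using hF
  have hcard : e.card = k := hunif e he
  have hneq : ∀ x (hx : x ∈ e), e ≠ F x hx := by
    intro x hx h
    exact hv (h ▸ hFv x hx)
  have hone : ∀ x (hx : x ∈ e), (e ∩ F x hx).card = 1 := by
    intro x hx
    refine le_antisymm (hlin e he _ (hFE x hx) (hneq x hx)) ?_
    exact Finset.one_le_card.2 ⟨x, Finset.mem_inter.2 ⟨hx, hFx x hx⟩⟩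
  have hFinj : ∀ x (hx : x ∈ e) y (hy : y ∈ e), F x hx = F y hy → x = y := by
    intro x hx y hy hFeq
    by_contra hne
    have h2 : ({x, y} : Finset (Fin m)) ⊆ e ∩ F x hx := by
      intro z hz
      rcases Finset.mem_insert.1 hz with hz | hz
      · rw [hz]; exact Finset.mem_inter.2 ⟨hx, hFx x hx⟩
      · rw [Finset.mem_singleton] at hz
        rw [hz]
        exact Finset.mem_inter.2 ⟨hy, hFeq ▸ hFx y hy⟩
    have := Finset.card_le_card h2
    rw [hone x hx, Finset.card_pair hne] at this
    omega
  let emb : Fin k → {x // x ∈ e} := fun i => e.equivFin.symm (finCongr hcard.symm i)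
  have embinj : Function.Injective emb := by
    intro i j h
    exact (finCongr hcard.symm).injective (e.equivFin.symm.injective h)
  refine ⟨v, hv, fun i => F (emb i).1 (emb i).2, ?_, ?_⟩
  · intro i j h
    exact embinj (Subtype.ext (hFinj _ _ _ _ h))
  · intro i
    exact ⟨hFE _ _, hFv _ _, hone _ _⟩
end

section
/- Let G be an n-vertex k-uniform hypergraph with vertex set V. Then ∑_{{u,v} ∈ C(V,2)} |N_G(u) ∩ N_G(v)|² = ∑_{(S_1, S_2) ∈ C(V,k−1)², S_1 ≠ S_2} C(|N_G(S_1) ∩ N_G(S_2)|, 2) + ∑_{S ∈ C(V,k−1)} C(|N_G(S)|, 2), where the first sum on the right ranges over ordered pairs of distinct (k−1)-sets. -/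
open scoped Classical

open Finset in
lemma stmt14_aux (n : ℕ) (p : Fin n → Prop) [DecidablePred p] :
    (((univ : Finset (Fin n)).powersetCard 2).filter (fun P => ∀ u ∈ P, p u)).card
      = Nat.choose ((univ.filter p).card) 2 := by
  rw [← card_powersetCard]
  congr 1
  ext P
  simp only [mem_filter, mem_powersetCard, subset_iff, mem_univ, true_and]
  tauto

/-- Double counting: `∑_{{u,v}} |N(u) ∩ N(v)|²` equals the sum over ordered pairs of distinct
`(k-1)`-sets `(S₁,S₂)` of `C(|N(S₁) ∩ N(S₂)|, 2)` plus `∑_S C(|N(S)|, 2)`. -/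
theorem stmt14 (k n : ℕ) (hk : 2 ≤ k)
    (E : Finset (Finset (Fin n))) (hunif : ∀ e ∈ E, e.card = k) :
    ∑ P ∈ (Finset.univ : Finset (Fin n)).powersetCard 2,
        ((((Finset.univ : Finset (Fin n)).powersetCard (k - 1)).filter
          (fun T => ∀ u ∈ P, insert u T ∈ E)).card) ^ 2
      = (∑ q ∈ (((Finset.univ : Finset (Fin n)).powersetCard (k - 1)) ×ˢ
            ((Finset.univ : Finset (Fin n)).powersetCard (k - 1))).filter
            (fun q => q.1 ≠ q.2),
          Nat.choose ((Finset.univ.filter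
            (fun x : Fin n => insert x q.1 ∈ E ∧ insert x q.2 ∈ E)).card) 2)
        + ∑ S ∈ (Finset.univ : Finset (Fin n)).powersetCard (k - 1),
            Nat.choose ((Finset.univ.filter (fun x : Fin n => insert x S ∈ E)).card) 2 := by
  classical
  open Finset in
  set A := (Finset.univ : Finset (Fin n)).powersetCard 2 with hA
  set B := (Finset.univ : Finset (Fin n)).powersetCard (k - 1) with hB
  set g : Finset (Fin n) × Finset (Fin n) → ℕ := fun q =>
    Nat.choose ((Finset.univ.filter
      (fun x : Fin n => insert x q.1 ∈ E ∧ insert x q.2 ∈ E)).card) 2 with hg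
  have hmain : ∑ P ∈ A,
      ((B.filter (fun T => ∀ u ∈ P, insert u T ∈ E)).card) ^ 2
      = ∑ q ∈ B ×ˢ B, g q := by
    have step1 : ∀ P : Finset (Fin n),
        ((B.filter (fun T => ∀ u ∈ P, insert u T ∈ E)).card) ^ 2
        = ∑ q ∈ B ×ˢ B,
            (if ∀ u ∈ P, insert u q.1 ∈ E ∧ insert u q.2 ∈ E then 1 else 0) := by
      intro P
      rw [sq, Finset.card_filter, Finset.sum_mul_sum, ← Finset.sum_product']
      refine Finset.sum_congr rfl fun q _ => ?_
      have h : (∀ u ∈ P, insert u q.1 ∈ E ∧ insert u q.2 ∈ E) ↔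
          ((∀ u ∈ P, insert u q.1 ∈ E) ∧ (∀ u ∈ P, insert u q.2 ∈ E)) := by
        constructor
        · intro h; exact ⟨fun u hu => (h u hu).1, fun u hu => (h u hu).2⟩
        · intro h u hu; exact ⟨h.1 u hu, h.2 u hu⟩
      simp only [h]
      split_ifs <;> simp_all
    calc ∑ P ∈ A, ((B.filter (fun T => ∀ u ∈ P, insert u T ∈ E)).card) ^ 2
        = ∑ P ∈ A, ∑ q ∈ B ×ˢ B,
            (if ∀ u ∈ P, insert u q.1 ∈ E ∧ insert u q.2 ∈ E then 1 else 0) :=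
          Finset.sum_congr rfl fun P _ => step1 P
      _ = ∑ q ∈ B ×ˢ B, ∑ P ∈ A,
            (if ∀ u ∈ P, insert u q.1 ∈ E ∧ insert u q.2 ∈ E then 1 else 0) :=
          Finset.sum_comm
      _ = ∑ q ∈ B ×ˢ B, g q := by
          refine Finset.sum_congr rfl fun q _ => ?_
          rw [← Finset.card_filter, hA]
          exact stmt14_aux n (fun x => insert x q.1 ∈ E ∧ insert x q.2 ∈ E)
  rw [hmain, ← Finset.sum_filter_add_sum_filter_not (B ×ˢ B) (fun q => q.1 ≠ q.2) g]
  congr 1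
  have hset : (B ×ˢ B).filter (fun q => ¬ q.1 ≠ q.2)
      = B.image (fun S => (S, S)) := by
    ext q
    simp only [Finset.mem_filter, Finset.mem_product, Finset.mem_image, not_not, ne_eq]
    constructor
    · rintro ⟨⟨h1, _⟩, h3⟩
      exact ⟨q.1, h1, by cases q; simp_all⟩
    · rintro ⟨S, hS, rfl⟩
      exact ⟨⟨hS, hS⟩, rfl⟩
  rw [hset, Finset.sum_image (by intro a _ b _ h; simpa using congrArg Prod.fst h)]
  refine Finset.sum_congr rfl fun S _ => ?_
  simp [hg, and_self]
end

section
/- Let H be a linear k-uniform hypergraph, let L = u_1, …, u_m be a d_H-degenerate ordering of V(H), and let W be a set of ℓ ≤ max{k, d_H} vertices. For any vertex v of H, the number of edges e containing v such that the rightmost vertex of e in the ordering L′ = (W, L∖W) (W placed first, remaining vertices in L-order) is v itself, is at most ℓ + d_H. -/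
open scoped Classical

/-- Left degrees in the reordering `L' = (W, L∖W)`: if `L` is a `d_H`-degenerate ordering of a
linear hypergraph and `σ'` puts the `ℓ ≤ max{k, d_H}` vertices of `W` first and keeps the
`L`-order on the rest, then every vertex is the rightmost vertex of at most `ℓ + d_H` edges. -/
theorem stmt18 (k m ℓ : ℕ) (hk : 2 ≤ k)
    (E : Finset (Finset (Fin m))) (hunif : ∀ e ∈ E, e.card = k)
    (hlin : ∀ e ∈ E, ∀ f ∈ E, e ≠ f → (e ∩ f).card ≤ 1)
    (L : Equiv.Perm (Fin m))
    (hLdeg : ∀ i : Fin m,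
      (E.filter (fun e => L i ∈ e ∧ ∀ x ∈ e, (L.symm x : ℕ) ≤ (i : ℕ))).card ≤ dH E)
    (W : Finset (Fin m)) (hWcard : W.card = ℓ) (hℓ : ℓ ≤ max k (dH E))
    (σ' : Equiv.Perm (Fin m))
    (hfirst : ∀ i : Fin m, (i : ℕ) < ℓ → σ' i ∈ W)
    (horder : ∀ i j : Fin m, ℓ ≤ (i : ℕ) → ℓ ≤ (j : ℕ) →
      (i ≤ j ↔ L.symm (σ' i) ≤ L.symm (σ' j))) :
    ∀ v : Fin m,
      (E.filter (fun e => v ∈ e ∧ ∀ x ∈ e, (σ'.symm x : ℕ) ≤ (σ'.symm v : ℕ))).card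
        ≤ ℓ + dH E := by
  intro v
  classical
  set S : Finset (Finset (Fin m)) :=
    E.filter (fun e => v ∈ e ∧ ∀ x ∈ e, (σ'.symm x : ℕ) ≤ (σ'.symm v : ℕ)) with hSdef
  have hSmem : ∀ e ∈ S, e ∈ E ∧ v ∈ e ∧ ∀ x ∈ e, (σ'.symm x : ℕ) ≤ (σ'.symm v : ℕ) := by
    intro e he
    rw [hSdef, Finset.mem_filter] at he
    tauto
  have hsplit : (S.filter (fun e => ∀ x ∈ e, (L.symm x : ℕ) ≤ (L.symm v : ℕ))).card
      + (S.filter (fun e => ¬ ∀ x ∈ e, (L.symm x : ℕ) ≤ (L.symm v : ℕ))).card = S.card :=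
    Finset.card_filter_add_card_filter_not _
  have hA : (S.filter (fun e => ∀ x ∈ e, (L.symm x : ℕ) ≤ (L.symm v : ℕ))).card ≤ dH E := by
    refine le_trans (Finset.card_le_card ?_) (hLdeg (L.symm v))
    intro e he
    rw [Finset.mem_filter] at he
    obtain ⟨heS, hq⟩ := he
    obtain ⟨heE, hve, -⟩ := hSmem e heS
    rw [Finset.mem_filter]
    refine ⟨heE, ?_, hq⟩
    simpa using hve
  have hB : (S.filter (fun e => ¬ ∀ x ∈ e, (L.symm x : ℕ) ≤ (L.symm v : ℕ))).card ≤ ℓ := by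
    rw [← hWcard]
    set f : Finset (Fin m) → Fin m := fun e =>
      if h : (e.filter (fun x => (L.symm v : ℕ) < (L.symm x : ℕ))).Nonempty
      then (e.filter (fun x => (L.symm v : ℕ) < (L.symm x : ℕ))).min' h
      else v with hfdef
    have key : ∀ e ∈ S.filter (fun e => ¬ ∀ x ∈ e, (L.symm x : ℕ) ≤ (L.symm v : ℕ)),
        e ∈ E ∧ v ∈ e ∧ f e ∈ e ∧ (L.symm v : ℕ) < (L.symm (f e) : ℕ) ∧ f e ∈ W := by
      intro e he
      rw [Finset.mem_filter] at he
      obtain ⟨heS, hnq⟩ := he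
      obtain ⟨heE, hve, hmax⟩ := hSmem e heS
      push_neg at hnq
      obtain ⟨x, hxe, hx⟩ := hnq
      have hne : (e.filter (fun x => (L.symm v : ℕ) < (L.symm x : ℕ))).Nonempty :=
        ⟨x, Finset.mem_filter.2 ⟨hxe, hx⟩⟩
      have hfe : f e = (e.filter (fun x => (L.symm v : ℕ) < (L.symm x : ℕ))).min' hne := by
        rw [hfdef]; exact dif_pos hne
      have hmem := (e.filter (fun x => (L.symm v : ℕ) < (L.symm x : ℕ))).min'_mem hne
      rw [← hfe, Finset.mem_filter] at hmem
      obtain ⟨hye, hylt⟩ := hmem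
      refine ⟨heE, hve, hye, hylt, ?_⟩
      have hyσ : (σ'.symm (f e) : ℕ) ≤ (σ'.symm v : ℕ) := hmax (f e) hye
      have hylℓ : (σ'.symm (f e) : ℕ) < ℓ := by
        by_contra hcon
        push_neg at hcon
        have hvl : ℓ ≤ (σ'.symm v : ℕ) := le_trans hcon hyσ
        have h2 := (horder (σ'.symm (f e)) (σ'.symm v) hcon hvl).1 (by
          rw [Fin.le_def]; exact hyσ)
        simp only [Equiv.apply_symm_apply] at h2
        rw [Fin.le_def] at h2
        omega
      have := hfirst (σ'.symm (f e)) hylℓ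
      simpa using this
    apply Finset.card_le_card_of_injOn f
    · intro e he
      exact (key e he).2.2.2.2
    · intro e he f' hf' heq
      obtain ⟨heE, hve, hfee, hlte, -⟩ := key e he
      obtain ⟨hfE, hvf, hfef, -, -⟩ := key f' hf'
      by_contra hcon
      have hcard := hlin e heE f' hfE hcon
      have hvne : v ≠ f e := by
        intro h; rw [← h] at hlte; omega
      have hsub : ({v, f e} : Finset (Fin m)) ⊆ e ∩ f' := by
        intro z hz
        rw [Finset.mem_insert, Finset.mem_singleton] at hz
        rcases hz with rfl | rfl
        · exact Finset.mem_inter.2 ⟨hve, hvf⟩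
        · rw [heq] at hfee ⊢
          exact Finset.mem_inter.2 ⟨hfee, hfef⟩
      have h2 : ({v, f e} : Finset (Fin m)).card = 2 := by
        rw [Finset.card_insert_of_notMem (by simpa using hvne)]
        simp
      have := Finset.card_le_card hsub
      omega
  omega
end
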